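/- For every real M > 1: (1/√M)·artanh(1/√M) − artanh(1/M) = Σ_{n=1}^{∞} ( (1/(4n − 1))·M^{−2n} − (2n/((4n + 1)(2n + 1)))·M^{−(2n+1)} ), where artanh denotes the inverse hyperbolic tangent and the series converges. -/
import Mathlib


/-- The inverse hyperbolic tangent, `artanh x = ½ ln((1+x)/(1−x))`. -/
noncomputable def artanh (x : ℝ) : ℝ := Real.log ((1 + x) / (1 - x)) / 2

lemma artanh_hasSum {x : ℝ} (h0 : 0 ≤ x) (h1 : x < 1) :
    HasSum (fun k : ℕ => x ^ (2 * k + 1) / (2 * (k : ℝ) + 1)) (artanh x) := by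
  have habs : |x| < 1 := abs_lt.2 ⟨by linarith, h1⟩
  have h := (Real.hasSum_log_sub_log_of_abs_lt_one habs).div_const 2
  have heq : artanh x = (Real.log (1 + x) - Real.log (1 - x)) / 2 := by
    rw [artanh, Real.log_div (by linarith) (by linarith)]
  have hfun : (fun k : ℕ => x ^ (2 * k + 1) / (2 * (k : ℝ) + 1)) =
      fun k : ℕ => (2 : ℝ) * (1 / (2 * (k : ℝ) + 1)) * x ^ (2 * k + 1) / 2 := by
    funext k; ring
  rw [heq, hfun]; exact h

/-- Equation (B3): for `M > 1`,
`(1/√M)·artanh(1/√M) − artanh(1/M) = Σ_{n=1}^∞ (M^{−2n}/(4n−1) − 2n·M^{−(2n+1)}/((4n+1)(2n+1)))`,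
and the series converges. -/
theorem stmt_17 (M : ℝ) (hM : 1 < M) :
    HasSum
      (fun k : ℕ =>
        (1 / (4 * ((k : ℝ) + 1) - 1)) * M ^ (-(2 * ((k : ℤ) + 1))) -
          (2 * ((k : ℝ) + 1) / ((4 * ((k : ℝ) + 1) + 1) * (2 * ((k : ℝ) + 1) + 1))) *
            M ^ (-(2 * ((k : ℤ) + 1) + 1)))
      (1 / Real.sqrt M * artanh (1 / Real.sqrt M) - artanh (1 / M)) := by
  have hM0 : (0 : ℝ) < M := lt_trans one_pos hM
  set x : ℝ := 1 / M with hxdef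
  have hx0 : 0 < x := by positivity
  have hx1 : x < 1 := by rw [hxdef, div_lt_one hM0]; exact hM
  have hsM : 1 < Real.sqrt M := by
    have := Real.sqrt_lt_sqrt (by norm_num) hM
    simpa using this
  have hsM0 : 0 < Real.sqrt M := lt_trans one_pos hsM
  set y : ℝ := 1 / Real.sqrt M with hydef
  have hy0 : 0 < y := by positivity
  have hy1 : y < 1 := by rw [hydef, div_lt_one hsM0]; exact hsM
  have hy2 : y ^ 2 = x := by
    rw [hydef, hxdef, div_pow, one_pow, Real.sq_sqrt hM0.le]
  -- series for artanh x
  have hB : HasSum (fun k : ℕ => x ^ (2 * k + 1) / (2 * (k : ℝ) + 1)) (artanh x) :=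
    artanh_hasSum hx0.le hx1
  -- series for y * artanh y, rewritten in terms of x
  set A : ℕ → ℝ := fun k => x ^ (k + 1) / (2 * (k : ℝ) + 1) with hAdef
  have hA : HasSum A (y * artanh y) := by
    have h := (artanh_hasSum hy0.le hy1).mul_left y
    have hfun : A = fun k : ℕ => y * (y ^ (2 * k + 1) / (2 * (k : ℝ) + 1)) := by
      funext k
      rw [hAdef]
      simp only [← hy2]
      ring
    rw [hfun]; exact h
  -- split A into even/odd parts
  have hinj2 : Function.Injective (fun n : ℕ => 2 * n) := fun a b h => by dsimp at h; omega
  have hinj2' : Function.Injective (fun n : ℕ => 2 * n + 1) := fun a b h => by dsimp at h; omega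
  have hAe : Summable (fun n : ℕ => A (2 * n)) := hA.summable.comp_injective hinj2
  have hAo : Summable (fun n : ℕ => A (2 * n + 1)) := hA.summable.comp_injective hinj2'
  have hsplit : HasSum A ((∑' n, A (2 * n)) + ∑' n, A (2 * n + 1)) :=
    hAe.hasSum.even_add_odd hAo.hasSum
  have hsum_eq : (∑' n, A (2 * n)) + (∑' n, A (2 * n + 1)) = y * artanh y :=
    hsplit.unique hA
  -- shift the even part
  have hAe' : HasSum (fun n : ℕ => A (2 * (n + 1))) ((∑' n, A (2 * n)) - A 0) := by
    have h := (hasSum_nat_add_iff' (f := fun n : ℕ => A (2 * n)) 1).2 hAe.hasSum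
    simpa using h
  -- shift the B series
  have hB' : HasSum (fun n : ℕ => x ^ (2 * (n + 1) + 1) / (2 * ((n : ℝ) + 1) + 1))
      (artanh x - x) := by
    have h := (hasSum_nat_add_iff'
      (f := fun k : ℕ => x ^ (2 * k + 1) / (2 * (k : ℝ) + 1)) 1).2 hB
    simp only [Finset.range_one, Finset.sum_singleton, Nat.cast_zero] at h
    norm_num at h
    convert h using 2 with n
  have htotal := (hAo.hasSum.add hAe').sub hB'
  have hval : (∑' n, A (2 * n + 1)) + ((∑' n, A (2 * n)) - A 0) - (artanh x - x) =
      y * artanh y - artanh x := by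
    have hA0 : A 0 = x := by simp [hAdef]
    rw [hA0]; linarith [hsum_eq]
  rw [hval] at htotal
  -- identify the target function with the one in htotal
  have hfun : (fun k : ℕ =>
        (1 / (4 * ((k : ℝ) + 1) - 1)) * M ^ (-(2 * ((k : ℤ) + 1))) -
          (2 * ((k : ℝ) + 1) / ((4 * ((k : ℝ) + 1) + 1) * (2 * ((k : ℝ) + 1) + 1))) *
            M ^ (-(2 * ((k : ℤ) + 1) + 1))) =
      fun k : ℕ => A (2 * k + 1) + A (2 * (k + 1)) -
        x ^ (2 * (k + 1) + 1) / (2 * ((k : ℝ) + 1) + 1) := by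
    funext k
    have e1 : M ^ (-(2 * ((k : ℤ) + 1))) = x ^ (2 * k + 2) := by
      rw [show (-(2 * ((k : ℤ) + 1))) = -((2 * k + 2 : ℕ) : ℤ) by push_cast; ring,
        zpow_neg, zpow_natCast, hxdef, one_div, inv_pow]
    have e2 : M ^ (-(2 * ((k : ℤ) + 1) + 1)) = x ^ (2 * k + 3) := by
      rw [show (-(2 * ((k : ℤ) + 1) + 1)) = -((2 * k + 3 : ℕ) : ℤ) by push_cast; ring,
        zpow_neg, zpow_natCast, hxdef, one_div, inv_pow]
    rw [e1, e2, hAdef]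
    simp only []
    push_cast
    have hk : (0:ℝ) ≤ (k:ℝ) := Nat.cast_nonneg k
    have d1 : (4 * ((k : ℝ) + 1) - 1) ≠ 0 := (show (0:ℝ) < _ by linarith).ne'
    have d2 : (4 * ((k : ℝ) + 1) + 1) ≠ 0 := by positivity
    have d3 : (2 * ((k : ℝ) + 1) + 1) ≠ 0 := by positivity
    have d4 : (2 * ((2 : ℝ) * k + 1) + 1) ≠ 0 := by positivity
    have d5 : (2 * ((2 : ℝ) * (k + 1)) + 1) ≠ 0 := by positivity
    field_simp
    ring
  rw [hfun, hydef, hxdef]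
  exact htotal
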